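/- arXiv:1307.5001 — 4 statements merged into one kernel-verified Lean document; each statement's English description precedes it below -/
import Mathlib

section
/- Let φ be a smoothing kernel with associated set G (properties A and B suffice), and let f ∈ C_{‖·‖}. Then for every x ∈ E the function h ↦ f(x+h) + φ(h) attains its minimum over Dom φ at some point of the interior of G; in particular min_{h ∈ Dom φ} [f(x+h) + φ(h)] = min_{h ∈ int G} [f(x+h) + φ(h)], and this minimum is achieved. -/
/-!
The function `ψ h = f (x + h) + φ h` is continuous on the compact set `G`, so it has a minimiser
there. On `∂G` the Lipschitz bound gives `ψ h > f (x + h) + N h ≥ f x = ψ 0`, so the minimiser is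
not on the boundary, i.e. it is an interior point of `G`. There it is a local minimiser of the convex
function `ψ` on `Dom φ`, hence a global one.
-/

open Set Pointwise

/-- `N` is a norm on the real vector space `E`. -/
structure IsNorm {E : Type*} [AddCommGroup E] [Module ℝ E] (N : E → ℝ) : Prop where
  nonneg : ∀ x, 0 ≤ N x
  eq_zero_iff : ∀ x, N x = 0 ↔ x = 0
  smul : ∀ (c : ℝ) (x : E), N (c • x) = |c| * N x
  add_le : ∀ x y, N (x + y) ≤ N x + N y

/-- The norm dual to `N` (w.r.t. the inner product identification). -/
noncomputable def dualNorm {E : Type*} [NormedAddCommGroup E] [InnerProductSpace ℝ E]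
    (N : E → ℝ) (ξ : E) : ℝ :=
  sSup ((fun x => (inner ℝ ξ x : ℝ)) '' {x : E | N x ≤ 1})

/-- `f` is Lipschitz continuous with constant 1 w.r.t. the norm `N`. -/
def LipWrt {E : Type*} [AddCommGroup E] [Module ℝ E] (N : E → ℝ) (f : E → ℝ) : Prop :=
  ∀ x y, |f x - f y| ≤ N (x - y)

/-- Membership in the class `C_{‖·‖}`: convex and 1-Lipschitz w.r.t. `N`. -/
def MemC {E : Type*} [AddCommGroup E] [Module ℝ E] (N : E → ℝ) (f : E → ℝ) : Prop :=
  ConvexOn ℝ Set.univ f ∧ LipWrt N f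

/-- A smoothing kernel: a twice continuously differentiable convex function `φ` on an open
convex set `dom`, with `φ(0) = 0`, `∇φ(0) = 0` (property A), together with a compact convex
set `G ⊆ dom` with `0 ∈ int G` and `φ > N` on `∂G` (property B). -/
structure SmoothingKernel (E : Type*) [NormedAddCommGroup E] [InnerProductSpace ℝ E]
    [FiniteDimensional ℝ E] (N : E → ℝ) where
  dom : Set E
  φ : E → ℝ
  dom_open : IsOpen dom
  dom_convex : Convex ℝ dom
  φ_smooth : ContDiffOn ℝ 2 φ dom
  φ_convex : ConvexOn ℝ dom φ
  zero_mem_dom : (0 : E) ∈ dom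
  φ_zero : φ 0 = 0
  grad_zero : gradient φ 0 = 0
  G : Set E
  G_sub_dom : G ⊆ dom
  G_compact : IsCompact G
  G_convex : Convex ℝ G
  zero_mem_int : (0 : E) ∈ interior G
  φ_gt_norm : ∀ x ∈ frontier G, N x < φ x

theorem IsMinOn.isLeast_image {α β : Type*} [Preorder β] {f : α → β} {s : Set α} {a : α}
    (hf : IsMinOn f s a) (ha : a ∈ s) : IsLeast (f '' s) (f a) :=
  ⟨mem_image_of_mem f ha, forall_mem_image.2 hf⟩

theorem IsCompact.exists_isMinOn_mem_interior {X β : Type*} [TopologicalSpace X]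
    [LinearOrder β] [TopologicalSpace β] [ClosedIicTopology β] {s : Set X} {ψ : X → β}
    (hs : IsCompact s) (hψ : ContinuousOn ψ s) {p : X} (hp : p ∈ s)
    (hfrontier : ∀ y ∈ frontier s, ψ p < ψ y) : ∃ y ∈ interior s, IsMinOn ψ s y := by
  obtain ⟨y, hy, hmin⟩ := hs.exists_isMinOn ⟨p, hp⟩ hψ
  refine ⟨y, by_contra fun hy_int => ?_, hmin⟩
  exact (hfrontier y ⟨subset_closure hy, hy_int⟩).not_ge (hmin hp)

theorem LipWrt.le_add {E : Type*} [AddCommGroup E] [Module ℝ E] {N f : E → ℝ}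
    (hf : LipWrt N f) (x h : E) : f x ≤ f (x + h) + N h := by
  have := (abs_le.1 (hf (x + h) x)).1
  rw [add_sub_cancel_left] at this
  linarith

variable {E : Type*} [NormedAddCommGroup E] [InnerProductSpace ℝ E]
  [FiniteDimensional ℝ E]

namespace SmoothingKernel

variable {N : E → ℝ} (K : SmoothingKernel E N) {f : E → ℝ}

theorem continuousOn_comp_add_add (hf : Continuous f) (x : E) :
    ContinuousOn (fun h => f (x + h) + K.φ h) K.dom :=
  (hf.comp (continuous_const_add x)).continuousOn.add K.φ_smooth.continuousOn

theorem convexOn_comp_add_add (hf : ConvexOn ℝ univ f) (x : E) :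
    ConvexOn ℝ K.dom (fun h => f (x + h) + K.φ h) :=
  ((hf.translate_right x).subset (subset_univ _) K.dom_convex).add K.φ_convex

theorem lt_comp_add_add_of_mem_frontier (hf : LipWrt N f) (x : E) {h : E}
    (hh : h ∈ frontier K.G) : f (x + 0) + K.φ 0 < f (x + h) + K.φ h := by
  rw [add_zero, K.φ_zero, add_zero]
  exact (hf.le_add x h).trans_lt (add_lt_add_right (K.φ_gt_norm h hh) _)

end SmoothingKernel

theorem smoothing_min_attained_in_interior_general
    {N : E → ℝ} (K : SmoothingKernel E N)
    (f : E → ℝ) (hf : MemC N f) (x : E) :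
    ∃ h₀ ∈ interior K.G,
      IsLeast ((fun h => f (x + h) + K.φ h) '' K.dom) (f (x + h₀) + K.φ h₀) ∧
      IsLeast ((fun h => f (x + h) + K.φ h) '' interior K.G) (f (x + h₀) + K.φ h₀) := by
  obtain ⟨h₀, hh₀, hmin_G⟩ := K.G_compact.exists_isMinOn_mem_interior
    ((K.continuousOn_comp_add_add hf.1.locallyLipschitz.continuous x).mono K.G_sub_dom)
    (interior_subset K.zero_mem_int) (fun h hh => K.lt_comp_add_add_of_mem_frontier hf.2 x hh)
  have hh₀_dom : h₀ ∈ K.dom := K.G_sub_dom (interior_subset hh₀)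
  have hmin_dom := IsMinOn.of_isLocalMinOn_of_convexOn hh₀_dom
    ((hmin_G.isLocalMin (mem_interior_iff_mem_nhds.1 hh₀)).on K.dom)
    (K.convexOn_comp_add_add hf.1 x)
  exact ⟨h₀, hh₀, hmin_dom.isLeast_image hh₀_dom,
    (hmin_G.on_subset interior_subset).isLeast_image hh₀⟩

/-- for every `x`, the function `h ↦ f(x+h) + φ(h)` attains its minimum over
`Dom φ` at a point of the interior of `G`; in particular the minimum over `Dom φ` coincides
with the minimum over `int G`, and both are achieved. -/
theorem smoothing_min_attained_in_interior
    {N : E → ℝ} (hN : IsNorm N) (K : SmoothingKernel E N)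
    (f : E → ℝ) (hf : MemC N f) (x : E) :
    ∃ h₀ ∈ interior K.G,
      IsLeast ((fun h => f (x + h) + K.φ h) '' K.dom) (f (x + h₀) + K.φ h₀) ∧
      IsLeast ((fun h => f (x + h) + K.φ h) '' interior K.G) (f (x + h₀) + K.φ h₀) :=
  smoothing_min_attained_in_interior_general K f hf x
end

section
/- Let φ be a smoothing kernel with associated set G, and assume in addition that φ is C^∞ on Dom φ with positive definite Hessian everywhere, and that f ∈ C_{‖·‖} is C^∞ on E. For each x ∈ E let h(x) ∈ int G denote the (unique) minimizer of h ↦ f(x+h) + φ(h) over Dom φ. Then S[f] is continuously differentiable and ∇S[f](x) = −∇φ(h(x)) for every x ∈ E. -/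
open Set Pointwise

/-- The smoothing `S[f](x) = min_{h ∈ Dom φ} [f(x+h) + φ(h)]`. -/
noncomputable def smoothing {E : Type*} [NormedAddCommGroup E] [InnerProductSpace ℝ E]
    [FiniteDimensional ℝ E] {N : E → ℝ} (K : SmoothingKernel E N) (f : E → ℝ) (x : E) : ℝ :=
  sInf ((fun h => f (x + h) + K.φ h) '' K.dom)

variable {E : Type*} [NormedAddCommGroup E] [InnerProductSpace ℝ E]
  [FiniteDimensional ℝ E]

/-- if moreover `φ` is `C^∞` on `Dom φ` with positive definite Hessian and
`f ∈ C_{‖·‖}` is `C^∞`, and `h(x)` denotes the unique minimizer of `h ↦ f(x+h) + φ(h)` over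
`Dom φ`, lying in `int G`, then `S[f]` is continuously differentiable with
`∇S[f](x) = −∇φ(h(x))` for all `x`. -/
theorem smoothing_gradient_formula
    {N : E → ℝ} (hN : IsNorm N) (K : SmoothingKernel E N)
    (hφ_smooth : ContDiffOn ℝ (⊤ : ℕ∞) K.φ K.dom)
    (hφ_posdef : ∀ h ∈ K.dom, ∀ e : E, e ≠ 0 → 0 < iteratedFDeriv ℝ 2 K.φ h ![e, e])
    (f : E → ℝ) (hf : MemC N f) (hf_smooth : ContDiff ℝ (⊤ : ℕ∞) f)
    (h : E → E)
    (h_int : ∀ x : E, h x ∈ interior K.G)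
    (h_min : ∀ x : E, ∀ h' ∈ K.dom, f (x + h x) + K.φ (h x) ≤ f (x + h') + K.φ h')
    (h_uniq : ∀ x : E, ∀ h' ∈ K.dom,
        f (x + h') + K.φ h' = f (x + h x) + K.φ (h x) → h' = h x) :
    ContDiff ℝ 1 (smoothing K f) ∧
      ∀ x : E, gradient (smoothing K f) x = -gradient K.φ (h x) := by
  classical
  have hx_dom : ∀ x : E, h x ∈ K.dom := fun x =>
    K.G_sub_dom (interior_subset (h_int x))
  -- S x = f (x + h x) + φ (h x)
  have Srep : ∀ x : E, smoothing K f x = f (x + h x) + K.φ (h x) := by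
    intro x
    refine IsLeast.csInf_eq ⟨⟨h x, hx_dom x, rfl⟩, ?_⟩
    rintro _ ⟨h', hh', rfl⟩
    exact h_min x h' hh'
  have Sle : ∀ (x h' : E), h' ∈ K.dom → smoothing K f x ≤ f (x + h') + K.φ h' := by
    intro x h' hh'
    have hb : BddBelow ((fun h'' => f (x + h'') + K.φ h'') '' K.dom) := by
      refine ⟨f (x + h x) + K.φ (h x), ?_⟩
      rintro _ ⟨h'', hh'', rfl⟩
      exact h_min x h'' hh''
    exact csInf_le hb ⟨h', hh', rfl⟩
  -- midpoint convexity of S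
  have Smid : ∀ p q : E, smoothing K f ((1/2 : ℝ) • p + (1/2 : ℝ) • q) ≤
      (1/2 : ℝ) * smoothing K f p + (1/2 : ℝ) * smoothing K f q := by
    intro p q
    have hmem : (1/2 : ℝ) • h p + (1/2 : ℝ) • h q ∈ K.dom :=
      K.dom_convex (hx_dom p) (hx_dom q) (by norm_num) (by norm_num) (by norm_num)
    have h1 := Sle ((1/2 : ℝ) • p + (1/2 : ℝ) • q) _ hmem
    have heq : (1/2 : ℝ) • p + (1/2 : ℝ) • q + ((1/2 : ℝ) • h p + (1/2 : ℝ) • h q)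
        = (1/2 : ℝ) • (p + h p) + (1/2 : ℝ) • (q + h q) := by module
    have hfconv := hf.1.2 (Set.mem_univ (p + h p)) (Set.mem_univ (q + h q))
      (by norm_num : (0:ℝ) ≤ 1/2) (by norm_num : (0:ℝ) ≤ 1/2) (by norm_num)
    have hφconv := K.φ_convex.2 (hx_dom p) (hx_dom q)
      (by norm_num : (0:ℝ) ≤ 1/2) (by norm_num : (0:ℝ) ≤ 1/2) (by norm_num)
    rw [heq] at h1
    rw [Srep p, Srep q]
    calc smoothing K f ((1/2 : ℝ) • p + (1/2 : ℝ) • q)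
        ≤ f ((1/2 : ℝ) • (p + h p) + (1/2 : ℝ) • (q + h q))
            + K.φ ((1/2 : ℝ) • h p + (1/2 : ℝ) • h q) := h1
      _ ≤ ((1/2 : ℝ) * f (p + h p) + (1/2 : ℝ) * f (q + h q))
            + ((1/2 : ℝ) * K.φ (h p) + (1/2 : ℝ) * K.φ (h q)) :=
          add_le_add hfconv hφconv
      _ = (1/2 : ℝ) * (f (p + h p) + K.φ (h p))
            + (1/2 : ℝ) * (f (q + h q) + K.φ (h q)) := by ring
  -- differentiability of φ on dom
  have φdiff : ∀ y ∈ K.dom, DifferentiableAt ℝ K.φ y := by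
    intro y hy
    exact (hφ_smooth.contDiffAt (K.dom_open.mem_nhds hy)).differentiableAt (by simp)
  have φcont : ∀ y ∈ K.dom, ContinuousAt K.φ y := fun y hy => (φdiff y hy).continuousAt
  -- continuity of h
  have hcont : Continuous h := by
    rw [continuous_iff_continuousAt]
    intro x
    rw [ContinuousAt, Filter.tendsto_iff_seq_tendsto]
    intro u hu
    apply Filter.tendsto_of_subseq_tendsto
    intro ns hns
    obtain ⟨a, haG, ms, hms, hma⟩ := K.G_compact.tendsto_subseq
      (x := fun n => h (u (ns n))) (fun n => interior_subset (h_int (u (ns n))))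
    have ha_dom : a ∈ K.dom := K.G_sub_dom haG
    have huns : Filter.Tendsto (fun n => u (ns (ms n))) Filter.atTop (nhds x) :=
      hu.comp (hns.comp hms.tendsto_atTop)
    have hma' : Filter.Tendsto (fun n => h (u (ns (ms n)))) Filter.atTop (nhds a) := hma
    -- the limit a is a minimizer for x
    have hlim : ∀ h' ∈ K.dom, f (x + a) + K.φ a ≤ f (x + h') + K.φ h' := by
      intro h' hh'
      have t1 : Filter.Tendsto (fun n => f (u (ns (ms n)) + h (u (ns (ms n))))
          + K.φ (h (u (ns (ms n))))) Filter.atTop (nhds (f (x + a) + K.φ a)) := by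
        refine Filter.Tendsto.add ?_ ?_
        · exact (hf_smooth.continuous.tendsto _).comp (huns.add hma')
        · exact ((φcont a ha_dom).tendsto).comp hma'
      have t2 : Filter.Tendsto (fun n => f (u (ns (ms n)) + h')
          + K.φ h') Filter.atTop (nhds (f (x + h') + K.φ h')) := by
        refine Filter.Tendsto.add ?_ tendsto_const_nhds
        exact (hf_smooth.continuous.tendsto _).comp (huns.add tendsto_const_nhds)
      exact le_of_tendsto_of_tendsto' t1 t2 (fun n => h_min (u (ns (ms n))) h' hh')
    have ha_eq : a = h x := by
      refine h_uniq x a ha_dom ?_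
      exact le_antisymm (hlim (h x) (hx_dom x)) (h_min x a ha_dom)
    exact ⟨ms, ha_eq ▸ hma⟩
  -- derivative of S
  have key : ∀ x : E, HasFDerivAt (smoothing K f) (fderiv ℝ f (x + h x)) x := by
    intro x₀
    obtain ⟨m, hm⟩ : ∃ m : E → ℝ, m = fun x => f (x + h x₀) + K.φ (h x₀) := ⟨_, rfl⟩
    obtain ⟨D, hD⟩ : ∃ D : E →L[ℝ] ℝ, D = fderiv ℝ f (x₀ + h x₀) := ⟨_, rfl⟩
    rw [← hD]
    have hmD : HasFDerivAt m D x₀ := by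
      rw [hm, hD]
      have h1 : HasFDerivAt (fun x : E => x + h x₀) (ContinuousLinearMap.id ℝ E) x₀ :=
        (hasFDerivAt_id x₀).add_const (h x₀)
      have h2 : HasFDerivAt f (fderiv ℝ f (x₀ + h x₀)) (x₀ + h x₀) :=
        (hf_smooth.differentiable (by simp) (x₀ + h x₀)).hasFDerivAt
      simpa using (h2.comp x₀ h1).add_const (K.φ (h x₀))
    have hSm : ∀ x, smoothing K f x ≤ m x := by
      intro x; rw [hm]; exact Sle x (h x₀) (hx_dom x₀)
    have hS0 : smoothing K f x₀ = m x₀ := by rw [hm]; exact Srep x₀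
    -- lower bound from midpoint convexity
    have hlow : ∀ y : E, 2 * m x₀ - m (x₀ - y) ≤ smoothing K f (x₀ + y) := by
      intro y
      have hmid := Smid (x₀ + y) (x₀ - y)
      have he : (1/2 : ℝ) • (x₀ + y) + (1/2 : ℝ) • (x₀ - y) = x₀ := by module
      rw [he] at hmid
      have h2' := hSm (x₀ - y)
      rw [hS0] at hmid
      linarith
    rw [hasFDerivAt_iff_isLittleO_nhds_zero]
    have hme : (fun y => m (x₀ + y) - m x₀ - D y) =o[nhds 0] fun y : E => y := by
      rw [← hasFDerivAt_iff_isLittleO_nhds_zero]; exact hmD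
    have hme' : (fun y => m (x₀ - y) - m x₀ - D (-y)) =o[nhds 0] fun y : E => y := by
      have hneg : Filter.Tendsto (fun y : E => -y) (nhds 0) (nhds 0) := by
        simpa using (continuous_neg.tendsto (0 : E))
      have h3 := hme.comp_tendsto hneg
      simp only [Function.comp_def, sub_eq_add_neg] at h3 ⊢
      exact h3.trans_isBigO ((Asymptotics.isBigO_refl (fun y : E => y) (nhds 0)).neg_left)
    have hbound : ∀ y : E, ‖smoothing K f (x₀ + y) - smoothing K f x₀ - D y‖ ≤
        ‖(‖m (x₀ + y) - m x₀ - D y‖ + ‖m (x₀ - y) - m x₀ - D (-y)‖ : ℝ)‖ := by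
      intro y
      have h1 : smoothing K f (x₀ + y) - smoothing K f x₀ - D y
          ≤ m (x₀ + y) - m x₀ - D y := by
        have := hSm (x₀ + y); rw [hS0]; linarith
      have h2 : -(m (x₀ - y) - m x₀ - D (-y))
          ≤ smoothing K f (x₀ + y) - smoothing K f x₀ - D y := by
        have h3 := hlow y
        have hDneg : D (-y) = -(D y) := by simp
        rw [hS0, hDneg]
        linarith
      have hA := le_abs_self (m (x₀ + y) - m x₀ - D y)
      have hB := neg_abs_le (m (x₀ - y) - m x₀ - D (-y))
      have hB' := le_abs_self (m (x₀ - y) - m x₀ - D (-y))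
      have hA0 := abs_nonneg (m (x₀ + y) - m x₀ - D y)
      have hB0 := abs_nonneg (m (x₀ - y) - m x₀ - D (-y))
      simp only [Real.norm_eq_abs]
      rw [abs_of_nonneg (by positivity :
        (0:ℝ) ≤ |m (x₀ + y) - m x₀ - D y| + |m (x₀ - y) - m x₀ - D (-y)|)]
      rw [abs_le]
      constructor <;> linarith
    exact Asymptotics.IsBigO.trans_isLittleO
      (Asymptotics.isBigO_of_le _ hbound) (hme.norm_left.add hme'.norm_left)
  have Sdiff : Differentiable ℝ (smoothing K f) := fun x => (key x).differentiableAt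
  -- first-order condition
  have foc : ∀ x : E, fderiv ℝ f (x + h x) = -fderiv ℝ K.φ (h x) := by
    intro x
    have hφd : HasFDerivAt K.φ (fderiv ℝ K.φ (h x)) (h x) :=
      (φdiff (h x) (hx_dom x)).hasFDerivAt
    have hfd : HasFDerivAt (fun h' : E => f (x + h')) (fderiv ℝ f (x + h x)) (h x) := by
      have h1 : HasFDerivAt (fun h' : E => x + h') (ContinuousLinearMap.id ℝ E) (h x) :=
        (hasFDerivAt_id (h x)).const_add x
      have h2 : HasFDerivAt f (fderiv ℝ f (x + h x)) (x + h x) :=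
        (hf_smooth.differentiable (by simp) (x + h x)).hasFDerivAt
      simpa [Function.comp_def] using h2.comp (h x) h1
    have hψd : HasFDerivAt (fun h' : E => f (x + h') + K.φ h')
        (fderiv ℝ f (x + h x) + fderiv ℝ K.φ (h x)) (h x) := hfd.add hφd
    have hloc : IsLocalMin (fun h' : E => f (x + h') + K.φ h') (h x) := by
      refine Filter.eventually_of_mem (K.dom_open.mem_nhds (hx_dom x)) ?_
      intro h' hh'
      exact h_min x h' hh'
    exact eq_neg_of_add_eq_zero_left (hloc.hasFDerivAt_eq_zero hψd)
  refine ⟨?_, ?_⟩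
  · rw [contDiff_one_iff_fderiv]
    refine ⟨Sdiff, ?_⟩
    have hfe : fderiv ℝ (smoothing K f) = fun x => fderiv ℝ f (x + h x) := by
      funext x; exact (key x).fderiv
    rw [hfe]
    have hcf : Continuous (fderiv ℝ f) := hf_smooth.continuous_fderiv (by simp)
    exact hcf.comp (continuous_id.add hcont)
  · intro x
    have hfx : fderiv ℝ (smoothing K f) x = -fderiv ℝ K.φ (h x) := by
      rw [(key x).fderiv]; exact foc x
    rw [show gradient (smoothing K f) x
        = (InnerProductSpace.toDual ℝ E).symm (fderiv ℝ (smoothing K f) x) from rfl,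
      show gradient K.φ (h x)
        = (InnerProductSpace.toDual ℝ E).symm (fderiv ℝ K.φ (h x)) from rfl,
      hfx, map_neg]
end

section
/- Let φ be a smoothing kernel with associated set G and constant M_φ, and let f ∈ C_{‖·‖}. Then the smoothing S[f] is continuously differentiable with Lipschitz continuous gradient: ‖∇S[f](x) − ∇S[f](y)‖_* ≤ M_φ ‖x−y‖ for all x, y ∈ E. -/
open Set Pointwise

/-- Property C: bound `⟨e, ∇²φ(h) e⟩ ≤ M ‖e‖²` on the Hessian quadratic form on `G`. -/
def HessBound {E : Type*} [NormedAddCommGroup E] [InnerProductSpace ℝ E]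
    [FiniteDimensional ℝ E] {N : E → ℝ} (K : SmoothingKernel E N) (M : ℝ) : Prop :=
  ∀ h ∈ K.G, ∀ e : E, iteratedFDeriv ℝ 2 K.φ h ![e, e] ≤ M * N e ^ 2

variable {E : Type*} [NormedAddCommGroup E] [InnerProductSpace ℝ E]
  [FiniteDimensional ℝ E]

/-!
The minimum defining `S[f](x)` is attained at a point `h(x)` with `φ(h(x)) ≤ ‖h(x)‖`; by (B)
these points form a compact subset of `int G`, so they stay a fixed distance `r` away from `∂G`.
Testing the minimum at `x + d` with the competitor `h(x) - d` and expanding `φ` to second order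
on `G` by (C) gives the upper model
`S[f](x + d) ≤ S[f](x) + ⟨g(x), d⟩ + M_φ/2 ‖d‖²` for small `d`, where `g(x) = -∇φ(h(x))`.
As an infimal convolution `S[f]` is convex, so the model forces `∇S[f] = g`; combining the model
with the subgradient inequality at two points bounds `‖g(y) - g(z)‖_*` by `M_φ ‖y - z‖` at small
scales, and halving `[y, z]` removes the restriction on scale.
-/

open Metric Filter Topology Asymptotics InnerProductSpace
open scoped RealInnerProductSpace

theorem le_add_deriv_add_half_of_deriv2_le {u u' u'' : ℝ → ℝ} {Q : ℝ}
    (hu : ∀ t ∈ Icc (0 : ℝ) 1, HasDerivAt u (u' t) t)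
    (hu' : ∀ t ∈ Ioo (0 : ℝ) 1, HasDerivAt u' (u'' t) t)
    (hQ : ∀ t ∈ Ioo (0 : ℝ) 1, u'' t ≤ Q) :
    u 1 ≤ u 0 + u' 0 + Q / 2 := by
  have hw : ∀ t ∈ Icc (0 : ℝ) 1, HasDerivAt (fun t => Q / 2 * t ^ 2 - u t) (Q * t - u' t) t :=
    fun t ht => (((hasDerivAt_pow 2 t).const_mul (Q / 2)).fun_sub (hu t ht)).congr_deriv
      (by push_cast; ring)
  have hconv : ConvexOn ℝ (Icc 0 1) (fun t => Q / 2 * t ^ 2 - u t) := by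
    refine convexOn_of_hasDerivWithinAt2_nonneg (convex_Icc 0 1)
      (fun t ht => (hw t ht).continuousAt.continuousWithinAt) (fun t ht => ?_) (fun t ht => ?_)
      (f' := fun t => Q * t - u' t) (f'' := fun t => Q - u'' t) (fun t ht => ?_)
    all_goals rw [interior_Icc] at ht
    · exact (hw t (Ioo_subset_Icc_self ht)).hasDerivWithinAt
    · exact ((((hasDerivAt_id t).const_mul Q).fun_sub (hu' t ht)).congr_deriv
        (by simp)).hasDerivWithinAt
    · exact sub_nonneg.2 (hQ t ht)
  have h := hconv.le_slope_of_hasDerivAt (left_mem_Icc.2 zero_le_one)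
    (right_mem_Icc.2 zero_le_one) zero_lt_one (hw 0 (left_mem_Icc.2 zero_le_one))
  rw [slope_def_field, sub_zero, div_one] at h
  linarith

theorem le_add_fderiv_add_half_of_iteratedFDeriv_two_le {V : Type*} [NormedAddCommGroup V]
    [NormedSpace ℝ V] {φ : V → ℝ} {U s : Set V} (hU : IsOpen U) (hφ : ContDiffOn ℝ 2 φ U)
    (hs : Convex ℝ s) (hsU : s ⊆ U) {q : V → ℝ}
    (hq : ∀ h ∈ s, ∀ e, iteratedFDeriv ℝ 2 φ h ![e, e] ≤ q e) {a b : V} (ha : a ∈ s)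
    (hb : b ∈ s) :
    φ b ≤ φ a + fderiv ℝ φ a (b - a) + q (b - a) / 2 := by
  set e := b - a
  have hpath : ∀ t ∈ Icc (0 : ℝ) 1, a + t • e ∈ s := fun t ht => hs.add_smul_sub_mem ha hb ht
  have hline : ∀ t : ℝ, HasDerivAt (fun t : ℝ => a + t • e) e t := fun t => by
    simpa using ((hasDerivAt_id t).smul_const e).const_add a
  have hsmooth : ∀ t ∈ Icc (0 : ℝ) 1, ContDiffAt ℝ 2 φ (a + t • e) := fun t ht =>
    hφ.contDiffAt (hU.mem_nhds (hsU (hpath t ht)))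
  have hu : ∀ t ∈ Icc (0 : ℝ) 1,
      HasDerivAt (fun t => φ (a + t • e)) (fderiv ℝ φ (a + t • e) e) t := fun t ht =>
    ((hsmooth t ht).differentiableAt two_ne_zero).hasFDerivAt.comp_hasDerivAt t (hline t)
  have hu' : ∀ t ∈ Icc (0 : ℝ) 1, HasDerivAt (fun t => fderiv ℝ φ (a + t • e) e)
      (fderiv ℝ (fderiv ℝ φ) (a + t • e) e e) t := fun t ht => by
    have hd := ((hsmooth t ht).fderiv_right (m := 1) le_rfl).differentiableAt one_ne_zero
    exact (ContinuousLinearMap.apply ℝ ℝ e).hasFDerivAt.comp_hasDerivAt t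
      (hd.hasFDerivAt.comp_hasDerivAt t (hline t))
  have hu'' : ∀ t ∈ Ioo (0 : ℝ) 1, fderiv ℝ (fderiv ℝ φ) (a + t • e) e e ≤ q e := fun t ht => by
    simpa [iteratedFDeriv_two_apply] using hq _ (hpath t (Ioo_subset_Icc_self ht)) e
  simpa [e] using le_add_deriv_add_half_of_deriv2_le hu
    (fun t ht => hu' t (Ioo_subset_Icc_self ht)) hu''

theorem le_mul_of_forall_two_mul_le {s n M ρ : ℝ} (hs : 0 ≤ s) (hn : 0 ≤ n) (hM : 0 < M)
    (hρ : 0 < ρ) (hnρ : n ≤ ρ) (h : ∀ t, 0 ≤ t → t ≤ ρ → 2 * t * s ≤ s * n + M * t ^ 2) :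
    s ≤ M * n := by
  have hsρ : s ≤ M * ρ := by
    have := h ρ hρ.le le_rfl
    nlinarith
  -- the optimal choice `t = s / M` gives `s² / M ≤ s * n`
  have hsM := h (s / M) (by positivity) (by rwa [div_le_iff₀' hM])
  have key : s * s ≤ s * (M * n) := by
    field_simp at hsM
    nlinarith
  rcases hs.eq_or_lt with rfl | hs'
  · positivity
  · exact le_of_mul_le_mul_left key hs'

section Gradient
variable {V : Type*} [NormedAddCommGroup V] [InnerProductSpace ℝ V] [CompleteSpace V]

theorem ConvexOn.add_inner_sub_le_of_hasGradientAt {F : V → ℝ} (hF : ConvexOn ℝ univ F)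
    {g x : V} (hx : HasGradientAt F g x) (y : V) : F x + ⟪g, y - x⟫_ℝ ≤ F y := by
  have hline : ConvexOn ℝ univ (F ∘ AffineMap.lineMap x y) := hF.comp_affineMap _
  have hx' : HasFDerivAt F (toDual ℝ V g) (AffineMap.lineMap x y (0 : ℝ)) := by
    rw [AffineMap.lineMap_apply_zero]; exact hx.hasFDerivAt
  have h := hline.le_slope_of_hasDerivAt (mem_univ 0) (mem_univ 1) zero_lt_one
    (hx'.comp_hasDerivAt 0 AffineMap.hasDerivAt_lineMap)
  simp only [slope_def_field, Function.comp_apply, AffineMap.lineMap_apply_zero,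
    AffineMap.lineMap_apply_one, sub_zero, div_one, toDual_apply_apply] at h
  linarith

theorem contDiff_one_of_hasGradientAt {F : V → ℝ} {g : V → V}
    (hF : ∀ x, HasGradientAt F (g x) x) (hg : Continuous g) : ContDiff ℝ 1 F := by
  rw [contDiff_one_iff_fderiv]
  refine ⟨fun x => (hF x).differentiableAt, ?_⟩
  rw [show fderiv ℝ F = toDual ℝ V ∘ g from funext fun x => (hF x).hasFDerivAt.fderiv]
  exact (toDual ℝ V).continuous.comp hg

end Gradient

namespace IsNorm

section Module
variable {V : Type*} [AddCommGroup V] [Module ℝ V] {N : V → ℝ}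

theorem map_zero (hN : IsNorm N) : N 0 = 0 := (hN.eq_zero_iff 0).2 rfl

theorem map_neg (hN : IsNorm N) (x : V) : N (-x) = N x := by
  simpa using hN.smul (-1) x

theorem pos (hN : IsNorm N) {x : V} (hx : x ≠ 0) : 0 < N x :=
  (hN.nonneg x).lt_of_ne' fun h => hx ((hN.eq_zero_iff x).1 h)

theorem convexOn (hN : IsNorm N) : ConvexOn ℝ univ N := by
  refine ⟨convex_univ, fun x _ y _ a b ha hb _ => ?_⟩
  calc N (a • x + b • y) ≤ N (a • x) + N (b • y) := hN.add_le _ _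
    _ = a • N x + b • N y := by
      rw [hN.smul, hN.smul, abs_of_nonneg ha, abs_of_nonneg hb, smul_eq_mul, smul_eq_mul]

theorem le_mul_of_le_mul_at_scale {W : Type*} [AddGroup W] (hN : IsNorm N) {D : W → ℝ}
    (hD : ∀ a b, D (a + b) ≤ D a + D b) {g : V → W} {M ρ : ℝ} (hρ : 0 < ρ)
    (hloc : ∀ y z, N (y - z) ≤ ρ → D (g y - g z) ≤ M * N (y - z)) (y z : V) :
    D (g y - g z) ≤ M * N (y - z) := by
  have hscale : ∀ n : ℕ, ∀ y z, N (y - z) ≤ 2 ^ n * ρ → D (g y - g z) ≤ M * N (y - z) := by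
    intro n
    induction n with
    | zero => simpa using hloc
    | succ n ih =>
      intro y z hyz
      set m : V := (2 : ℝ)⁻¹ • (y + z)
      have hym : y - m = (2 : ℝ)⁻¹ • (y - z) := by module
      have hmz : m - z = (2 : ℝ)⁻¹ • (y - z) := by module
      have hhalf : N ((2 : ℝ)⁻¹ • (y - z)) = N (y - z) / 2 := by
        rw [hN.smul, abs_of_pos (by norm_num)]; ring
      have hle : N (y - z) / 2 ≤ 2 ^ n * ρ := by rw [pow_succ] at hyz; linarith
      have h₁ := ih y m (by rwa [hym, hhalf])
      have h₂ := ih m z (by rwa [hmz, hhalf])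
      rw [hym, hhalf] at h₁
      rw [hmz, hhalf] at h₂
      calc D (g y - g z) = D ((g y - g m) + (g m - g z)) := by rw [sub_add_sub_cancel]
        _ ≤ D (g y - g m) + D (g m - g z) := hD _ _
        _ ≤ M * N (y - z) := by linarith
  obtain ⟨n, hn⟩ := pow_unbounded_of_one_lt (N (y - z) / ρ) one_lt_two
  exact hscale n y z (by rw [div_lt_iff₀ hρ] at hn; exact hn.le)

end Module

section Normed
variable {V : Type*} [NormedAddCommGroup V] [NormedSpace ℝ V] [FiniteDimensional ℝ V]
  {N : V → ℝ}

theorem continuous (hN : IsNorm N) : Continuous N :=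
  continuousOn_univ.1 (hN.convexOn.continuousOn isOpen_univ)

theorem exists_le_mul_norm (hN : IsNorm N) : ∃ C, 0 < C ∧ ∀ x, N x ≤ C * ‖x‖ := by
  let p : Seminorm ℝ V := .of N hN.add_le fun a x => by rw [hN.smul, Real.norm_eq_abs]
  exact p.bound_of_continuous_normedSpace hN.continuous

theorem exists_mul_norm_le (hN : IsNorm N) : ∃ c, 0 < c ∧ ∀ x, c * ‖x‖ ≤ N x := by
  rcases subsingleton_or_nontrivial V with _ | _
  · exact ⟨1, one_pos, fun x => by simp [Subsingleton.elim x 0, hN.map_zero]⟩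
  obtain ⟨x₀, hx₀, hmin⟩ := (isCompact_sphere (0 : V) 1).exists_isMinOn
    (NormedSpace.sphere_nonempty.2 zero_le_one) hN.continuous.continuousOn
  refine ⟨N x₀, hN.pos (ne_zero_of_mem_sphere one_ne_zero ⟨x₀, hx₀⟩), fun x => ?_⟩
  rcases eq_or_ne x 0 with rfl | hx
  · simp [hN.map_zero]
  have hnx : 0 < ‖x‖ := norm_pos_iff.2 hx
  have h : N x₀ ≤ N (‖x‖⁻¹ • x) := hmin (by simp [norm_smul, hnx.ne'])
  rw [hN.smul, abs_of_pos (inv_pos.2 hnx), le_inv_mul_iff₀ hnx] at h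
  linarith [mul_comm (N x₀) ‖x‖]

theorem isCompact_setOf_le_one (hN : IsNorm N) : IsCompact {x : V | N x ≤ 1} := by
  obtain ⟨c, hc, hcN⟩ := hN.exists_mul_norm_le
  refine isCompact_of_isClosed_isBounded (isClosed_le hN.continuous continuous_const) ?_
  refine (isBounded_iff_subset_closedBall 0).2 ⟨c⁻¹, fun x hx => ?_⟩
  rw [mem_closedBall_zero_iff, ← one_div, le_div_iff₀' hc]
  exact (hcN x).trans hx

end Normed

section InnerProduct
variable {V : Type*} [NormedAddCommGroup V] [InnerProductSpace ℝ V] {N : V → ℝ}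

theorem dualNorm_zero (hN : IsNorm N) : dualNorm N 0 = 0 := by
  simp only [dualNorm, inner_zero_left]
  rw [Set.Nonempty.image_const ⟨0, by simp [hN.map_zero]⟩, csSup_singleton]

theorem two_mul_inner_le_of_le (hN : IsNorm N) {F : V → ℝ} {g : V → V} {M ρ : ℝ} (hM : 0 ≤ M)
    (hle : ∀ x d, N d ≤ ρ → F (x + d) ≤ F x + ⟪g x, d⟫_ℝ + M / 2 * N d ^ 2)
    (hsub : ∀ x y, F x + ⟪g x, y - x⟫_ℝ ≤ F y) (y z : V) {w : V} (hw : N w ≤ 1) {t : ℝ}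
    (ht : 0 ≤ t) (htρ : t ≤ ρ) :
    2 * t * ⟪g y - g z, w⟫_ℝ ≤ ⟪g y - g z, y - z⟫_ℝ + M * t ^ 2 := by
  have hNtw : N (t • w) ≤ t := by
    rw [hN.smul, abs_of_nonneg ht]; exact mul_le_of_le_one_right ht hw
  have hsq : M / 2 * N (t • w) ^ 2 ≤ M / 2 * t ^ 2 := by
    have := hN.nonneg (t • w)
    gcongr
  have h₁ := hsub y (z + t • w)
  have h₂ := hle z (t • w) (hNtw.trans htρ)
  have h₃ := hsub z (y + -(t • w))
  have h₄ := hle y (-(t • w)) (by rw [hN.map_neg]; exact hNtw.trans htρ)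
  rw [hN.map_neg] at h₄
  simp only [inner_add_right, inner_sub_right, inner_sub_left, inner_neg_right,
    inner_smul_right] at h₁ h₂ h₃ h₄ ⊢
  linarith

end InnerProduct

variable {N : E → ℝ}

theorem inner_le_dualNorm (hN : IsNorm N) (ξ : E) {x : E} (hx : N x ≤ 1) :
    ⟪ξ, x⟫_ℝ ≤ dualNorm N ξ :=
  le_csSup (hN.isCompact_setOf_le_one.image (innerSL ℝ ξ).continuous).bddAbove ⟨x, hx, rfl⟩

theorem exists_inner_eq_dualNorm (hN : IsNorm N) (ξ : E) :
    ∃ x, N x ≤ 1 ∧ ⟪ξ, x⟫_ℝ = dualNorm N ξ := by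
  have hne : {x : E | N x ≤ 1}.Nonempty := ⟨0, by simp [hN.map_zero]⟩
  obtain ⟨x, hx, hmax⟩ := hN.isCompact_setOf_le_one.exists_isMaxOn hne
    (innerSL ℝ ξ).continuous.continuousOn
  refine ⟨x, hx, le_antisymm (hN.inner_le_dualNorm ξ hx) (csSup_le (hne.image _) ?_)⟩
  rintro _ ⟨y, hy, rfl⟩
  exact hmax hy

theorem dualNorm_nonneg (hN : IsNorm N) (ξ : E) : 0 ≤ dualNorm N ξ := by
  simpa using hN.inner_le_dualNorm ξ (x := (0 : E)) (by simp [hN.map_zero])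

theorem inner_le_dualNorm_mul (hN : IsNorm N) (ξ x : E) : ⟪ξ, x⟫_ℝ ≤ dualNorm N ξ * N x := by
  rcases eq_or_ne x 0 with rfl | hx
  · simp [hN.map_zero]
  have hNx := hN.pos hx
  have h := hN.inner_le_dualNorm ξ (x := (N x)⁻¹ • x)
    (by rw [hN.smul, abs_of_pos (inv_pos.2 hNx), inv_mul_cancel₀ hNx.ne'])
  rwa [inner_smul_right, inv_mul_le_iff₀ hNx, mul_comm] at h

theorem dualNorm_add_le (hN : IsNorm N) (ξ η : E) :
    dualNorm N (ξ + η) ≤ dualNorm N ξ + dualNorm N η := by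
  obtain ⟨x, hx, hmax⟩ := hN.exists_inner_eq_dualNorm (ξ + η)
  rw [← hmax, inner_add_left]
  exact add_le_add (hN.inner_le_dualNorm ξ hx) (hN.inner_le_dualNorm η hx)

theorem norm_le_mul_dualNorm (hN : IsNorm N) {C : ℝ} (hC : ∀ x, N x ≤ C * ‖x‖) (ξ : E) :
    ‖ξ‖ ≤ C * dualNorm N ξ := by
  rcases eq_or_ne ξ 0 with rfl | hξ
  · simp [hN.dualNorm_zero]
  have hsq : ‖ξ‖ * ‖ξ‖ ≤ (C * dualNorm N ξ) * ‖ξ‖ :=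
    calc ‖ξ‖ * ‖ξ‖ = ⟪ξ, ξ⟫_ℝ := (real_inner_self_eq_norm_mul_norm ξ).symm
      _ ≤ dualNorm N ξ * N ξ := hN.inner_le_dualNorm_mul ξ ξ
      _ ≤ dualNorm N ξ * (C * ‖ξ‖) := mul_le_mul_of_nonneg_left (hC ξ) (hN.dualNorm_nonneg ξ)
      _ = (C * dualNorm N ξ) * ‖ξ‖ := by ring
  exact le_of_mul_le_mul_right hsq (norm_pos_iff.2 hξ)

theorem continuous_of_dualNorm_sub_le (hN : IsNorm N) {g : E → E} {M : ℝ}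
    (h : ∀ y z, dualNorm N (g y - g z) ≤ M * N (y - z)) : Continuous g := by
  obtain ⟨C, hC, hCN⟩ := hN.exists_le_mul_norm
  refine (LipschitzWith.of_dist_le' (K := C * (|M| * C)) fun y z => ?_).continuous
  rw [dist_eq_norm, dist_eq_norm]
  calc ‖g y - g z‖ ≤ C * dualNorm N (g y - g z) := hN.norm_le_mul_dualNorm hCN _
    _ ≤ C * (|M| * (C * ‖y - z‖)) := by
      gcongr
      exact (h y z).trans (mul_le_mul (le_abs_self M) (hCN _) (hN.nonneg _) (abs_nonneg M))
    _ = C * (|M| * C) * ‖y - z‖ := by ring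

theorem dualNorm_sub_le_of_le (hN : IsNorm N) {F : E → ℝ} {g : E → E} {M ρ : ℝ} (hM : 0 < M)
    (hρ : 0 < ρ) (hle : ∀ x d, N d ≤ ρ → F (x + d) ≤ F x + ⟪g x, d⟫_ℝ + M / 2 * N d ^ 2)
    (hsub : ∀ x y, F x + ⟪g x, y - x⟫_ℝ ≤ F y) (y z : E) :
    dualNorm N (g y - g z) ≤ M * N (y - z) := by
  refine hN.le_mul_of_le_mul_at_scale hN.dualNorm_add_le hρ (fun y z hyz => ?_) y z
  obtain ⟨w, hw, hws⟩ := hN.exists_inner_eq_dualNorm (g y - g z)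
  refine le_mul_of_forall_two_mul_le (hN.dualNorm_nonneg _) (hN.nonneg _) hM hρ hyz
    fun t ht htρ => ?_
  calc 2 * t * dualNorm N (g y - g z) = 2 * t * ⟪g y - g z, w⟫_ℝ := by rw [hws]
    _ ≤ ⟪g y - g z, y - z⟫_ℝ + M * t ^ 2 := hN.two_mul_inner_le_of_le hM.le hle hsub y z hw ht htρ
    _ ≤ dualNorm N (g y - g z) * N (y - z) + M * t ^ 2 := by
      gcongr; exact hN.inner_le_dualNorm_mul _ _

end IsNorm

theorem ConvexOn.hasGradientAt_of_le {F : E → ℝ} (hF : ConvexOn ℝ univ F) {N : E → ℝ}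
    (hN : IsNorm N) {x g : E} {M ρ : ℝ} (hρ : 0 < ρ)
    (hle : ∀ d, N d ≤ ρ → F (x + d) ≤ F x + ⟪g, d⟫_ℝ + M / 2 * N d ^ 2) :
    HasGradientAt F g x := by
  obtain ⟨C, hC, hCN⟩ := hN.exists_le_mul_norm
  have hmid : ∀ d, F x ≤ (F (x + d) + F (x - d)) / 2 := fun d => by
    have h := hF.2 (mem_univ (x + d)) (mem_univ (x - d)) (by norm_num : (0 : ℝ) ≤ 1 / 2)
      (by norm_num : (0 : ℝ) ≤ 1 / 2) (by norm_num)
    rw [show (1 / 2 : ℝ) • (x + d) + (1 / 2 : ℝ) • (x - d) = x by module, smul_eq_mul,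
      smul_eq_mul] at h
    linarith
  have hrem : ∀ d, N d ≤ ρ → |F (x + d) - F x - ⟪g, d⟫_ℝ| ≤ M / 2 * N d ^ 2 := fun d hd => by
    have h₁ := hle d hd
    have h₂ := hle (-d) (by rwa [hN.map_neg])
    rw [hN.map_neg, inner_neg_right, ← sub_eq_add_neg] at h₂
    rw [abs_le]
    constructor <;> linarith [hmid d]
  have hnear : ∀ᶠ d in 𝓝 (0 : E), N d ≤ ρ := by
    have h := hN.continuous.tendsto 0
    rw [hN.map_zero] at h
    exact h.eventually (eventually_le_nhds hρ)
  rw [hasGradientAt_iff_isLittleO_nhds_zero]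
  refine (IsBigO.of_bound (|M| / 2 * C ^ 2) ?_).trans_isLittleO (isLittleO_norm_pow_id one_lt_two)
  filter_upwards [hnear] with d hd
  rw [Real.norm_eq_abs, norm_pow, norm_norm]
  have := hN.nonneg d
  calc _ ≤ M / 2 * N d ^ 2 := hrem d hd
    _ ≤ |M| / 2 * (C * ‖d‖) ^ 2 := by gcongr; exacts [le_abs_self M, hCN d]
    _ = |M| / 2 * C ^ 2 * ‖d‖ ^ 2 := by ring

namespace SmoothingKernel
variable {N : E → ℝ} (K : SmoothingKernel E N)

theorem le_add_inner_gradient_add {M : ℝ} (hM : HessBound K M) {a b : E} (ha : a ∈ K.G)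
    (hb : b ∈ K.G) : K.φ b ≤ K.φ a + ⟪gradient K.φ a, b - a⟫_ℝ + M / 2 * N (b - a) ^ 2 := by
  have h := le_add_fderiv_add_half_of_iteratedFDeriv_two_le K.dom_open K.φ_smooth K.G_convex
    K.G_sub_dom (q := fun e => M * N e ^ 2) hM ha hb
  rw [← inner_gradient_left] at h
  linarith

theorem pos_of_hessBound [Nontrivial E] (hN : IsNorm N) {M : ℝ} (hM : HessBound K M) : 0 < M := by
  have h0 : (0 : E) ∈ K.G := interior_subset K.zero_mem_int
  obtain ⟨q, hq⟩ : (frontier K.G).Nonempty :=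
    nonempty_frontier_iff.2 ⟨⟨0, h0⟩, fun h => noncompact_univ E (h ▸ K.G_compact)⟩
  have h := K.le_add_inner_gradient_add hM h0 (K.G_compact.isClosed.frontier_subset hq)
  rw [K.φ_zero, K.grad_zero, inner_zero_left, sub_zero] at h
  nlinarith [K.φ_gt_norm q hq, hN.nonneg q]

theorem setOf_le_subset_interior : {h ∈ K.G | K.φ h ≤ N h} ⊆ interior K.G := by
  rintro h ⟨hG, hle⟩
  by_contra hint
  have hfr : h ∈ frontier K.G := by rw [K.G_compact.isClosed.frontier_eq]; exact ⟨hG, hint⟩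
  exact (K.φ_gt_norm h hfr).not_ge hle

theorem exists_cthickening_setOf_le_subset (hN : IsNorm N) :
    ∃ r, 0 < r ∧ cthickening r {h ∈ K.G | K.φ h ≤ N h} ⊆ K.G := by
  have hcpt : IsCompact {h ∈ K.G | K.φ h ≤ N h} :=
    K.G_compact.of_isClosed_subset (K.G_compact.isClosed.isClosed_le
      (K.φ_smooth.continuousOn.mono K.G_sub_dom) hN.continuous.continuousOn) (sep_subset _ _)
  obtain ⟨r, hr, hsub⟩ :=
    hcpt.exists_cthickening_subset_open isOpen_interior K.setOf_le_subset_interior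
  exact ⟨r, hr, hsub.trans interior_subset⟩

theorem exists_isMinOn {f : E → ℝ} (hf : MemC N f) (x : E) :
    ∃ h ∈ {h ∈ K.G | K.φ h ≤ N h}, IsMinOn (fun h => f (x + h) + K.φ h) K.dom h := by
  have h0 : (0 : E) ∈ K.G := interior_subset K.zero_mem_int
  have hfc : Continuous f := continuousOn_univ.1 (hf.1.continuousOn isOpen_univ)
  have hψ : ContinuousOn (fun h => f (x + h) + K.φ h) K.G :=
    (hfc.comp (continuous_const_add x)).continuousOn.add (K.φ_smooth.continuousOn.mono K.G_sub_dom)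
  obtain ⟨h, hG, hmin⟩ := K.G_compact.exists_isMinOn ⟨0, h0⟩ hψ
  have hle : K.φ h ≤ N h := by
    have hψh : f (x + h) + K.φ h ≤ f x := by simpa [K.φ_zero] using hmin h0
    have hlip : f x - f (x + h) ≤ N h := by simpa using (neg_le_abs _).trans (hf.2 (x + h) x)
    linarith
  have hint := K.setOf_le_subset_interior ⟨hG, hle⟩
  refine ⟨h, ⟨hG, hle⟩, IsMinOn.of_isLocalMinOn_of_convexOn (K.G_sub_dom hG)
    ((hmin.isLocalMin (mem_interior_iff_mem_nhds.1 hint)).on K.dom) ?_⟩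
  exact ((hf.1.translate_right x).subset (fun _ _ => trivial) K.dom_convex).add K.φ_convex

variable {f : E → ℝ}

theorem smoothing_eq_of_isMinOn {x h : E} (hh : h ∈ K.dom)
    (hmin : IsMinOn (fun h => f (x + h) + K.φ h) K.dom h) :
    smoothing K f x = f (x + h) + K.φ h :=
  IsLeast.csInf_eq ⟨mem_image_of_mem _ hh, forall_mem_image.2 fun _ hk => hmin hk⟩

theorem convexOn_smoothing (hf : ConvexOn ℝ univ f)
    (hmin : ∀ x, ∃ h ∈ K.dom, IsMinOn (fun h => f (x + h) + K.φ h) K.dom h) :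
    ConvexOn ℝ univ (smoothing K f) := by
  refine ⟨convex_univ, fun x _ y _ a b ha hb hab => ?_⟩
  obtain ⟨hx, hxd, hxm⟩ := hmin x
  obtain ⟨hy, hyd, hym⟩ := hmin y
  obtain ⟨hz, hzd, hzm⟩ := hmin (a • x + b • y)
  rw [K.smoothing_eq_of_isMinOn hxd hxm, K.smoothing_eq_of_isMinOn hyd hym,
    K.smoothing_eq_of_isMinOn hzd hzm]
  calc f (a • x + b • y + hz) + K.φ hz
      ≤ f (a • x + b • y + (a • hx + b • hy)) + K.φ (a • hx + b • hy) :=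
        hzm (K.dom_convex hxd hyd ha hb hab)
    _ = f (a • (x + hx) + b • (y + hy)) + K.φ (a • hx + b • hy) := by
        rw [show a • x + b • y + (a • hx + b • hy) = a • (x + hx) + b • (y + hy) by module]
    _ ≤ (a • f (x + hx) + b • f (y + hy)) + (a • K.φ hx + b • K.φ hy) :=
        add_le_add (hf.2 trivial trivial ha hb hab) (K.φ_convex.2 hxd hyd ha hb hab)
    _ = a • (f (x + hx) + K.φ hx) + b • (f (y + hy) + K.φ hy) := by
        simp only [smul_eq_mul]; ring

theorem smoothing_add_le (hN : IsNorm N) {M : ℝ} (hM : HessBound K M)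
    (hmin : ∀ x, ∃ h ∈ K.dom, IsMinOn (fun h => f (x + h) + K.φ h) K.dom h) {x h : E}
    (hh : h ∈ K.dom) (hxmin : IsMinOn (fun h => f (x + h) + K.φ h) K.dom h) {r : ℝ}
    (hball : closedBall h r ⊆ K.G) {d : E} (hd : ‖d‖ ≤ r) :
    smoothing K f (x + d) ≤ smoothing K f x + ⟪-gradient K.φ h, d⟫_ℝ + M / 2 * N d ^ 2 := by
  obtain ⟨k, hk, hkmin⟩ := hmin (x + d)
  have hhd : h - d ∈ K.G := hball (by simpa [dist_eq_norm] using hd)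
  have hhG : h ∈ K.G := hball (mem_closedBall_self ((norm_nonneg d).trans hd))
  rw [K.smoothing_eq_of_isMinOn hk hkmin, K.smoothing_eq_of_isMinOn hh hxmin]
  have h₁ : f (x + d + k) + K.φ k ≤ f (x + d + (h - d)) + K.φ (h - d) :=
    hkmin (K.G_sub_dom hhd)
  have h₂ := K.le_add_inner_gradient_add hM hhG hhd
  rw [show x + d + (h - d) = x + h by abel] at h₁
  rw [show h - d - h = -d by abel, hN.map_neg, inner_neg_right] at h₂
  rw [inner_neg_left]
  linarith

end SmoothingKernel

/-- for any `f ∈ C_{‖·‖}`, the smoothing `S[f]` is continuously differentiable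
with `M_φ`-Lipschitz gradient: `‖∇S[f](x) − ∇S[f](y)‖_* ≤ M_φ ‖x − y‖` for all `x, y`. -/
theorem smoothing_gradient_lipschitz
    {N : E → ℝ} (hN : IsNorm N) (K : SmoothingKernel E N) (M : ℝ) (hM : HessBound K M)
    (f : E → ℝ) (hf : MemC N f) :
    ContDiff ℝ 1 (smoothing K f) ∧
      ∀ x y : E, dualNorm N (gradient (smoothing K f) x - gradient (smoothing K f) y)
        ≤ M * N (x - y) := by
  rcases subsingleton_or_nontrivial E with _ | _
  · refine ⟨?_, fun x y => ?_⟩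
    · rw [show smoothing K f = fun _ => smoothing K f 0 from
        funext fun x => by rw [Subsingleton.elim x 0]]
      exact contDiff_const
    · rw [Subsingleton.elim x y, sub_self, sub_self, hN.dualNorm_zero, hN.map_zero, mul_zero]
  obtain ⟨c, hc, hcN⟩ := hN.exists_mul_norm_le
  obtain ⟨r, hr, hrG⟩ := K.exists_cthickening_setOf_le_subset hN
  choose m hmT hmin using K.exists_isMinOn hf
  have hmin' : ∀ x, ∃ h ∈ K.dom, IsMinOn (fun h => f (x + h) + K.φ h) K.dom h :=
    fun x => ⟨m x, K.G_sub_dom (hmT x).1, hmin x⟩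
  have hle : ∀ x d, N d ≤ c * r → smoothing K f (x + d) ≤
      smoothing K f x + ⟪-gradient K.φ (m x), d⟫_ℝ + M / 2 * N d ^ 2 := fun x d hd =>
    K.smoothing_add_le hN hM hmin' (K.G_sub_dom (hmT x).1) (hmin x)
      ((closedBall_subset_cthickening (hmT x) r).trans hrG)
      (le_of_mul_le_mul_left ((hcN d).trans hd) hc)
  have hconv := K.convexOn_smoothing hf.1 hmin'
  have hgrad : ∀ x, HasGradientAt (smoothing K f) (-gradient K.φ (m x)) x :=
    fun x => hconv.hasGradientAt_of_le hN (mul_pos hc hr) (hle x)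
  have hlip := hN.dualNorm_sub_le_of_le (K.pos_of_hessBound hN hM) (mul_pos hc hr) hle
    fun x y => hconv.add_inner_sub_le_of_hasGradientAt (hgrad x) y
  rw [gradient_eq hgrad]
  exact ⟨contDiff_one_of_hasGradientAt hgrad (hN.continuous_of_dualNorm_sub_le hlip), hlip⟩
end

section
/- The scaled smoothing is local: let φ be a smoothing kernel with associated set G, let f, g ∈ C_{‖·‖}, χ > 0 and x ∈ E. If f(y) = g(y) for all y ∈ x + χG, then S_χ[f](x) = S_χ[g](x). Consequently, if f and g coincide on U + χG for an open set U ⊆ E, then S_χ[f] and S_χ[g] coincide on U, and in particular ∇S_χ[f] = ∇S_χ[g] on U. -/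
open Set Pointwise

/-- The scaled smoothing `S_χ[f](x) = min_{h ∈ χ·Dom φ} [f(x+h) + χ φ(h/χ)]`. -/
noncomputable def smoothingScaled {E : Type*} [NormedAddCommGroup E] [InnerProductSpace ℝ E]
    [FiniteDimensional ℝ E] {N : E → ℝ} (K : SmoothingKernel E N) (χ : ℝ) (f : E → ℝ)
    (x : E) : ℝ :=
  sInf ((fun h => f (x + h) + χ * K.φ (χ⁻¹ • h)) '' (χ • K.dom))

variable {E : Type*} [NormedAddCommGroup E] [InnerProductSpace ℝ E]
  [FiniteDimensional ℝ E]

/-!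
Substituting `h = χ y`, `S_χ[f](x)` is the infimum over `Dom φ` of the convex function
`F(y) = f(x + χ y) + χ φ(y)`. For `y ∈ ∂G`, the Lipschitz bound and `φ > N` give
`F(0) = f(x) ≤ F(y)`; by convexity `F` then cannot decrease along a ray from `0` after the ray
leaves `G`, so every value of `F` is dominated by one taken on `G`. The infimum is therefore
an infimum over `G`, which only sees `f` on `x + χG`.
-/
lemma csInf_image_eq_of_forall_exists_le {α β : Type*} [ConditionallyCompleteLattice β]
    {F : α → β} {s t : Set α} (hst : s ⊆ t) (hs : s.Nonempty) (hbdd : BddBelow (F '' s))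
    (hle : ∀ x ∈ t, ∃ y ∈ s, F y ≤ F x) : sInf (F '' t) = sInf (F '' s) := by
  have hbdd_t : BddBelow (F '' t) := by
    obtain ⟨b, hb⟩ := hbdd
    refine ⟨b, ?_⟩
    rintro _ ⟨x, hx, rfl⟩
    obtain ⟨y, hy, hyx⟩ := hle x hx
    exact (hb (mem_image_of_mem F hy)).trans hyx
  refine le_antisymm (csInf_le_csInf hbdd_t (hs.image F) (image_mono hst)) ?_
  refine le_csInf ((hs.mono hst).image F) ?_
  rintro _ ⟨x, hx, rfl⟩
  obtain ⟨y, hy, hyx⟩ := hle x hx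
  exact (csInf_le hbdd (mem_image_of_mem F hy)).trans hyx

lemma exists_smul_mem_frontier_of_notMem {V : Type*} [AddCommGroup V] [Module ℝ V]
    [TopologicalSpace V] [ContinuousSMul ℝ V] {G : Set V} (hG : (0 : V) ∈ interior G)
    {v : V} (hv : v ∉ G) : ∃ t ∈ Ioc (0 : ℝ) 1, t • v ∈ frontier G := by
  have hray : IsPreconnected ((fun t : ℝ => t • v) '' Icc 0 1) :=
    isPreconnected_Icc.image _ (continuous_id.smul continuous_const).continuousOn
  have hmeets : ∃ t ∈ Icc (0 : ℝ) 1, t • v ∈ frontier G := by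
    by_contra! hnot
    have hcover : (fun t : ℝ => t • v) '' Icc 0 1 ⊆ interior G ∪ (closure G)ᶜ := by
      rintro _ ⟨t, ht, rfl⟩
      by_cases hcl : t • v ∈ closure G
      · exact Or.inl (by_contra fun hint => hnot t ht ⟨hcl, hint⟩)
      · exact Or.inr hcl
    rcases hray.subset_or_subset isOpen_interior isClosed_closure.isOpen_compl
      (disjoint_compl_right.mono_left interior_subset_closure) hcover with hint | hext
    · exact hv (interior_subset (by simpa using hint ⟨1, right_mem_Icc.2 zero_le_one, rfl⟩))
    · exact hext ⟨0, left_mem_Icc.2 zero_le_one, rfl⟩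
        (by simpa using subset_closure (interior_subset hG))
  obtain ⟨t, ⟨ht0, ht1⟩, ht⟩ := hmeets
  refine ⟨t, ⟨ht0.lt_of_ne ?_, ht1⟩, ht⟩
  rintro rfl
  exact ht.2 (by simpa using hG)

lemma LipWrt.apply_le_apply_add {V : Type*} [AddCommGroup V] [Module ℝ V] {N : V → ℝ}
    {f : V → ℝ} (hf : LipWrt N f) (x v : V) : f x ≤ f (x + v) + N v := by
  have := hf (x + v) x
  rw [add_sub_cancel_left] at this
  linarith [neg_abs_le (f (x + v) - f x)]

/-- The objective of `smoothingScaled K χ f x` in the rescaled variable `h / χ`, which ranges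
over `K.dom`. -/
noncomputable def smoothingObjective {N : E → ℝ} (K : SmoothingKernel E N) (χ : ℝ)
    (f : E → ℝ) (x : E) (h : E) : ℝ :=
  f (x + χ • h) + χ * K.φ h

section SmoothingObjective

variable {N : E → ℝ} (K : SmoothingKernel E N) {χ : ℝ} {f : E → ℝ} (x : E)

lemma smoothingScaled_eq_sInf_image_dom (hχ : χ ≠ 0) :
    smoothingScaled K χ f x = sInf (smoothingObjective K χ f x '' K.dom) := by
  rw [smoothingScaled, ← image_smul, image_image]
  congr 1
  refine image_congr fun h _ => ?_
  rw [smul_smul, inv_mul_cancel₀ hχ, one_smul, smoothingObjective]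

lemma convexOn_smoothingObjective (hf : ConvexOn ℝ univ f) (hχ : 0 ≤ χ) :
    ConvexOn ℝ K.dom (smoothingObjective K χ f x) := by
  have hshift : ConvexOn ℝ univ fun h => f (x + χ • h) := by
    simpa [Function.comp_def] using
      (hf.translate_right x).comp_linearMap (LinearMap.lsmul ℝ E χ)
  exact (hshift.subset (subset_univ _) K.dom_convex).add (K.φ_convex.smul hχ)

lemma continuousOn_smoothingObjective (hf : Continuous f) :
    ContinuousOn (smoothingObjective K χ f x) K.dom :=
  (hf.comp (continuous_const.add (continuous_const_smul χ))).continuousOn.add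
    (continuousOn_const.mul K.φ_smooth.continuousOn)

lemma smoothingObjective_zero_le_of_mem_frontier (hN : IsNorm N) (hf : LipWrt N f)
    (hχ : 0 ≤ χ) {y : E} (hy : y ∈ frontier K.G) :
    smoothingObjective K χ f x 0 ≤ smoothingObjective K χ f x y := by
  have hNφ := mul_le_mul_of_nonneg_left (K.φ_gt_norm y hy).le hχ
  have hNχ : N (χ • y) = χ * N y := by rw [hN.smul, abs_of_nonneg hχ]
  have hlip := hf.apply_le_apply_add x (χ • y)
  simp only [smoothingObjective, smul_zero, add_zero, K.φ_zero, mul_zero]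
  linarith

lemma exists_mem_G_smoothingObjective_le (hN : IsNorm N) (hf : MemC N f) (hχ : 0 ≤ χ)
    {h : E} (hh : h ∈ K.dom) :
    ∃ y ∈ K.G, smoothingObjective K χ f x y ≤ smoothingObjective K χ f x h := by
  by_cases hG : h ∈ K.G
  · exact ⟨h, hG, le_rfl⟩
  obtain ⟨t, ⟨ht0, ht1⟩, hfront⟩ := exists_smul_mem_frontier_of_notMem K.zero_mem_int hG
  have hle := smoothingObjective_zero_le_of_mem_frontier K x hN hf.2 hχ hfront
  refine ⟨t • h, K.G_compact.isClosed.frontier_subset hfront, ?_⟩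
  have hseg := (convexOn_smoothingObjective K x hf.1 hχ).le_right_of_left_le' K.zero_mem_dom hh
    (sub_nonneg.2 ht1) ht0 (sub_add_cancel 1 t)
  simp only [smul_zero, zero_add] at hseg
  exact hseg hle

lemma smoothingScaled_eq_sInf_image_G (hN : IsNorm N) (hf : MemC N f) (hχ : 0 < χ) :
    smoothingScaled K χ f x = sInf (smoothingObjective K χ f x '' K.G) := by
  have hfc : Continuous f := continuousOn_univ.mp (hf.1.continuousOn isOpen_univ)
  have hGne : K.G.Nonempty := ⟨0, interior_subset K.zero_mem_int⟩
  rw [smoothingScaled_eq_sInf_image_dom K x hχ.ne']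
  exact csInf_image_eq_of_forall_exists_le K.G_sub_dom hGne
    (K.G_compact.bddBelow_image ((continuousOn_smoothingObjective K x hfc).mono K.G_sub_dom))
    fun h hh => exists_mem_G_smoothingObjective_le K x hN hf hχ.le hh

lemma smoothingScaled_congr (hN : IsNorm N) {g : E → ℝ} (hf : MemC N f) (hg : MemC N g)
    (hχ : 0 < χ) (hfg : ∀ h ∈ K.G, f (x + χ • h) = g (x + χ • h)) :
    smoothingScaled K χ f x = smoothingScaled K χ g x := by
  rw [smoothingScaled_eq_sInf_image_G K x hN hf hχ, smoothingScaled_eq_sInf_image_G K x hN hg hχ]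
  refine congrArg sInf (image_congr fun h hh => ?_)
  rw [smoothingObjective, smoothingObjective, hfg h hh]

end SmoothingObjective

/-- the scaled smoothing is local: if `f = g` on `x + χG` then
`S_χ[f](x) = S_χ[g](x)`; consequently, if `f = g` on `U + χG` for an open `U`, then
`S_χ[f] = S_χ[g]` on `U` and `∇S_χ[f] = ∇S_χ[g]` on `U`. -/
theorem smoothingScaled_local
    {N : E → ℝ} (hN : IsNorm N) (K : SmoothingKernel E N)
    (f g : E → ℝ) (hf : MemC N f) (hg : MemC N g) (χ : ℝ) (hχ : 0 < χ) :
    (∀ x : E, (∀ h ∈ K.G, f (x + χ • h) = g (x + χ • h)) →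
        smoothingScaled K χ f x = smoothingScaled K χ g x) ∧
    ∀ U : Set E, IsOpen U → (∀ u ∈ U, ∀ h ∈ K.G, f (u + χ • h) = g (u + χ • h)) →
      Set.EqOn (smoothingScaled K χ f) (smoothingScaled K χ g) U ∧
      Set.EqOn (gradient (smoothingScaled K χ f)) (gradient (smoothingScaled K χ g)) U := by
  have hpoint := fun x => smoothingScaled_congr K x hN hf hg hχ
  refine ⟨hpoint, fun U hU hfg => ⟨fun u hu => hpoint u (hfg u hu), fun u hu => ?_⟩⟩
  exact (Filter.eventuallyEq_of_mem (hU.mem_nhds hu) fun v hv => hpoint v (hfg v hv)).gradient_eq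
end
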